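/- arXiv:math/0207033 — 5 statements merged into one kernel-verified Lean document; each statement's English description precedes it below -/
import Mathlib

section
/- For any problem with states having positive populations π₁,…,π_s summing to Π, and house size r, the quota vector q_i = r·π_i/Π satisfies Σ_i q_i = r, and there exists an allocation α (a vector of non-negative integers summing to r) with ⌊q_i⌋ ≤ α_i ≤ ⌈q_i⌉ for all i. -/
/-!
Round the partial sums `q₀ + ⋯ + qₙ` down and take successive differences. The differences
telescope to `⌊∑ qᵢ⌋`, and each lies between `⌊qₙ⌋` and `⌈qₙ⌉` because
`⌊a⌋ + ⌊b⌋ ≤ ⌊a + b⌋ ≤ ⌊a⌋ + ⌈b⌉`. For quotas the total `∑ qᵢ = r` is an integer and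
every `qᵢ ≥ 0`, so the rounded values form an allocation satisfying quota.
-/

open Finset

theorem Int.floor_add_le_floor_add_ceil {R : Type*} [Ring R] [LinearOrder R] [FloorRing R]
    [IsStrictOrderedRing R] (a b : R) : ⌊a + b⌋ ≤ ⌊a⌋ + ⌈b⌉ :=
  calc ⌊a + b⌋ ≤ ⌊a + (⌈b⌉ : R)⌋ := Int.floor_le_floor (add_le_add_right (Int.le_ceil b) a)
    _ = ⌊a⌋ + ⌈b⌉ := Int.floor_add_intCast a _

noncomputable def cumulativeRounding (q : ℕ → ℝ) (n : ℕ) : ℤ :=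
  ⌊∑ i ∈ range (n + 1), q i⌋ - ⌊∑ i ∈ range n, q i⌋

theorem floor_le_cumulativeRounding (q : ℕ → ℝ) (n : ℕ) : ⌊q n⌋ ≤ cumulativeRounding q n := by
  have := Int.le_floor_add (∑ i ∈ range n, q i) (q n)
  rw [cumulativeRounding, sum_range_succ]
  omega

theorem cumulativeRounding_le_ceil (q : ℕ → ℝ) (n : ℕ) : cumulativeRounding q n ≤ ⌈q n⌉ := by
  have := Int.floor_add_le_floor_add_ceil (∑ i ∈ range n, q i) (q n)
  rw [cumulativeRounding, sum_range_succ]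
  omega

theorem sum_range_cumulativeRounding (q : ℕ → ℝ) (n : ℕ) :
    ∑ i ∈ range n, cumulativeRounding q i = ⌊∑ i ∈ range n, q i⌋ := by
  simp [cumulativeRounding, sum_range_sub (fun k => ⌊∑ i ∈ range k, q i⌋)]

theorem exists_intRounding_fin {n : ℕ} (q : Fin n → ℝ) :
    ∃ β : Fin n → ℤ, ∑ i, β i = ⌊∑ i, q i⌋ ∧ ∀ i, ⌊q i⌋ ≤ β i ∧ β i ≤ ⌈q i⌉ := by
  let q' : ℕ → ℝ := fun k => if h : k < n then q ⟨k, h⟩ else 0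
  have hq' : ∀ i : Fin n, q' i = q i := fun i => dif_pos i.isLt
  refine ⟨fun i => cumulativeRounding q' i, ?_, fun i => ?_⟩
  · rw [Fin.sum_univ_eq_sum_range (cumulativeRounding q') n, sum_range_cumulativeRounding,
      ← Fin.sum_univ_eq_sum_range q' n]
    simp only [hq']
  · rw [← hq' i]
    exact ⟨floor_le_cumulativeRounding q' i, cumulativeRounding_le_ceil q' i⟩

theorem exists_intRounding {ι : Type*} [Fintype ι] (q : ι → ℝ) :
    ∃ β : ι → ℤ, ∑ i, β i = ⌊∑ i, q i⌋ ∧ ∀ i, ⌊q i⌋ ≤ β i ∧ β i ≤ ⌈q i⌉ := by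
  let e := Fintype.equivFin ι
  obtain ⟨β, hsum, hβ⟩ := exists_intRounding_fin (q ∘ e.symm)
  refine ⟨β ∘ e, ?_, fun i => by simpa using hβ (e i)⟩
  rwa [Function.comp_def, e.sum_comp β, ← e.symm.sum_comp q]

theorem exists_natRounding_of_sum_eq {ι : Type*} [Fintype ι] (q : ι → ℝ) (hq : ∀ i, 0 ≤ q i)
    (r : ℕ) (hsum : ∑ i, q i = r) :
    ∃ α : ι → ℕ, ∑ i, α i = r ∧ ∀ i, ⌊q i⌋ ≤ (α i : ℤ) ∧ (α i : ℤ) ≤ ⌈q i⌉ := by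
  obtain ⟨β, hβsum, hβ⟩ := exists_intRounding q
  have hβ_nonneg : ∀ i, 0 ≤ β i := fun i => (Int.floor_nonneg.2 (hq i)).trans (hβ i).1
  refine ⟨fun i => (β i).toNat, ?_, fun i => by simpa [Int.toNat_of_nonneg (hβ_nonneg i)] using hβ i⟩
  zify
  simpa [Int.toNat_of_nonneg (hβ_nonneg _), hsum] using hβsum

theorem sum_mul_div_sum {ι : Type*} [Fintype ι] (r : ℝ) (π : ι → ℝ) (h : ∑ i, π i ≠ 0) :
    ∑ i, r * π i / ∑ j, π j = r := by
  rw [← sum_div, ← mul_sum, mul_div_assoc, div_self h, mul_one]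

/-- For any problem with states having positive populations summing to `Π`
and house size `r`, the quotas `q i = r * π i / Pi` sum to `r`, and there
exists an allocation (non-negative integers summing to `r`) satisfying quota. -/
theorem stmt_0 (s : ℕ) (hs : 0 < s) (π : Fin s → ℝ) (hπ : ∀ i, 0 < π i)
    (r : ℕ) (Pi : ℝ) (hPi : Pi = ∑ i, π i)
    (q : Fin s → ℝ) (hq : ∀ i, q i = r * π i / Pi) :
    (∑ i, q i = r) ∧
    ∃ α : Fin s → ℕ, (∑ i, α i = r) ∧
      ∀ i, ⌊q i⌋ ≤ (α i : ℤ) ∧ (α i : ℤ) ≤ ⌈q i⌉ := by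
  have hPi_pos : 0 < Pi := hPi ▸ sum_pos (fun i _ => hπ i) ⟨⟨0, hs⟩, mem_univ _⟩
  have hsum : ∑ i, q i = r := by
    simp only [hq, hPi]
    exact sum_mul_div_sum _ π (hPi ▸ hPi_pos.ne')
  refine ⟨hsum, exists_natRounding_of_sum_eq q (fun i => ?_) r hsum⟩
  rw [hq i]
  exact div_nonneg (mul_nonneg r.cast_nonneg (hπ i).le) hPi_pos.le
end

section
/- Given quotas q_i ≥ 0 summing to r ∈ ℕ, and lower bounds l_i ∈ ℕ, there exists an allocation α (non-negative integers summing to r) satisfying quota (⌊q_i⌋ ≤ α_i ≤ ⌈q_i⌉ for all i) and α_i ≥ l_i for all i, if and only if l_i ≤ ⌈q_i⌉ for all i and Σ_i max(l_i, ⌊q_i⌋) ≤ r. -/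
/-! Necessity is immediate. Conversely, an allocation is exactly a vector of integers between
`max (l i) ⌊q i⌋` and `⌈q i⌉` with sum `r`; such a vector exists because `r` lies between the sums
of the two bounds (`∑ ⌈q i⌉ ≥ ∑ q i = r`), and values confined to intervals can be chosen to reach
any sum between the sums of the endpoints. -/

open Finset

theorem Finset.exists_le_le_sum_eq {ι M : Type*} [AddCommGroup M] [LinearOrder M]
    [IsOrderedAddMonoid M] (t : Finset ι) {a b : ι → M} (hab : ∀ i ∈ t, a i ≤ b i) {r : M}
    (ha : ∑ i ∈ t, a i ≤ r) (hb : r ≤ ∑ i ∈ t, b i) :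
    ∃ x : ι → M, (∀ i ∈ t, a i ≤ x i ∧ x i ≤ b i) ∧ ∑ i ∈ t, x i = r := by
  classical
  induction t using Finset.induction_on generalizing r with
  | empty => exact ⟨a, by simp, le_antisymm (by simpa using ha) (by simpa using hb)⟩
  | @insert j t hj ih =>
    rw [sum_insert hj] at ha hb
    have hab_t : ∀ i ∈ t, a i ≤ b i := fun i hi => hab i (mem_insert_of_mem hi)
    have hsum_t : ∑ i ∈ t, a i ≤ ∑ i ∈ t, b i := sum_le_sum hab_t
    -- Give `j` as little as possible: just enough for the rest to be reachable by `t`.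
    set y := max (a j) (r - ∑ i ∈ t, b i)
    have hy_le_b : y ≤ b j :=
      max_le (hab j (mem_insert_self j t)) (sub_le_iff_le_add.2 hb)
    have hy_le_rest : y ≤ r - ∑ i ∈ t, a i :=
      max_le (le_sub_iff_add_le.2 ha) (sub_le_sub_left hsum_t r)
    obtain ⟨x, hx, hx_sum⟩ := ih hab_t (le_sub_comm.1 hy_le_rest)
      (sub_le_comm.1 (le_max_right _ _))
    refine ⟨Function.update x j y, fun i hi => ?_, ?_⟩
    · rcases mem_insert.1 hi with rfl | hi
      · simpa using ⟨le_max_left _ _, hy_le_b⟩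
      · simpa [ne_of_mem_of_not_mem hi hj] using hx i hi
    · rw [sum_insert hj, Function.update_self, sum_update_of_notMem hj, hx_sum,
        add_sub_cancel]

theorem stmt_1_general (s : ℕ) (q : Fin s → ℝ)
    (r : ℕ) (hsum : ∑ i, q i = r) (l : Fin s → ℕ) :
    (∃ α : Fin s → ℕ, (∑ i, α i = r) ∧
        (∀ i, ⌊q i⌋ ≤ (α i : ℤ) ∧ (α i : ℤ) ≤ ⌈q i⌉) ∧
        (∀ i, l i ≤ α i)) ↔
      ((∀ i, (l i : ℤ) ≤ ⌈q i⌉) ∧ ∑ i, max (l i : ℤ) ⌊q i⌋ ≤ (r : ℤ)) := by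
  constructor
  · rintro ⟨α, hα_sum, hα_quota, hα_l⟩
    refine ⟨fun i => (Nat.cast_le.2 (hα_l i)).trans (hα_quota i).2, ?_⟩
    calc ∑ i, max (l i : ℤ) ⌊q i⌋ ≤ ∑ i, (α i : ℤ) :=
          sum_le_sum fun i _ => max_le (Nat.cast_le.2 (hα_l i)) (hα_quota i).1
      _ = r := by exact_mod_cast hα_sum
  · rintro ⟨hl, hr⟩
    have hr_ceil : (r : ℤ) ≤ ∑ i, ⌈q i⌉ := by
      rw [← Int.cast_le (R := ℝ), Int.cast_natCast, ← hsum, Int.cast_sum]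
      exact sum_le_sum fun i _ => Int.le_ceil (q i)
    obtain ⟨x, hx, hx_sum⟩ := univ.exists_le_le_sum_eq
      (fun i _ => max_le (hl i) (Int.floor_le_ceil (q i))) hr hr_ceil
    have hx_l : ∀ i, (l i : ℤ) ≤ x i := fun i => (le_max_left _ _).trans (hx i (mem_univ i)).1
    have hx_nonneg : ∀ i, 0 ≤ x i := fun i => (Nat.cast_nonneg _).trans (hx_l i)
    have hx_toNat : ∀ i, ((x i).toNat : ℤ) = x i := fun i => Int.toNat_of_nonneg (hx_nonneg i)
    refine ⟨fun i => (x i).toNat, ?_, fun i => ?_, fun i => ?_⟩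
    · simp only [← Nat.cast_inj (R := ℤ), Nat.cast_sum, hx_toNat, hx_sum]
    · rw [hx_toNat]
      exact ⟨(le_max_right _ _).trans (hx i (mem_univ i)).1, (hx i (mem_univ i)).2⟩
    · exact (Int.le_toNat (hx_nonneg i)).2 (hx_l i)

/-- Given quotas `q i ≥ 0` summing to `r ∈ ℕ` and lower bounds `l i ∈ ℕ`,
there exists an allocation satisfying quota and with lower bound `l`
iff `l i ≤ ⌈q i⌉` for all `i` and `∑ i, max (l i) ⌊q i⌋ ≤ r`. -/
theorem stmt_1 (s : ℕ) (q : Fin s → ℝ) (hq : ∀ i, 0 ≤ q i)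
    (r : ℕ) (hsum : ∑ i, q i = r) (l : Fin s → ℕ) :
    (∃ α : Fin s → ℕ, (∑ i, α i = r) ∧
        (∀ i, ⌊q i⌋ ≤ (α i : ℤ) ∧ (α i : ℤ) ≤ ⌈q i⌉) ∧
        (∀ i, l i ≤ α i)) ↔
      ((∀ i, (l i : ℤ) ≤ ⌈q i⌉) ∧ ∑ i, max (l i : ℤ) ⌊q i⌋ ≤ (r : ℤ)) :=
  stmt_1_general s q r hsum l
end

section
/- Let q'_1,…,q'_s ∈ [0,1), and let U be a random variable uniformly distributed on [0,1). Define Q_i(U) = U + Σ_{j≤i} q'_j and A'_i(U) = indicator that [Q_{i-1}(U), Q_i(U)) contains an integer. Then E[A'_i(U)] = q'_i for every i; equivalently, the Lebesgue measure of {u ∈ [0,1) : [Q_{i-1}(u), Q_i(u)) contains an integer} equals q'_i. -/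
/-!
Whether `[u + c, u + c + q)` contains an integer is invariant under integer shifts of `u`, so the
measure of the set of such `u` is the same in every window of length one. In the window where
`u + c ∈ (0, 1]` and `q ≤ 1`, the only integer that can occur is `1`, and it occurs exactly for
`u` in an interval of length `q`.
-/

open MeasureTheory Set

def icoHitsInt (c q : ℝ) : Set ℝ := {x | ∃ n : ℤ, (n : ℝ) ∈ Ico (x + c) (x + c + q)}

lemma icoHitsInt_eq_iUnion (c q : ℝ) : icoHitsInt c q = ⋃ n : ℤ, Ioc (n - c - q) (n - c) := by
  ext x
  simp only [icoHitsInt, mem_ofPred_eq, mem_iUnion, mem_Ico, mem_Ioc]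
  refine exists_congr fun n => ?_
  constructor <;> rintro ⟨h₁, h₂⟩ <;> constructor <;> linarith

lemma measurableSet_icoHitsInt (c q : ℝ) : MeasurableSet (icoHitsInt c q) := by
  rw [icoHitsInt_eq_iUnion]
  exact MeasurableSet.iUnion fun _ => measurableSet_Ioc

lemma add_int_mem_icoHitsInt_iff (c q : ℝ) (m : ℤ) (x : ℝ) :
    x + m ∈ icoHitsInt c q ↔ x ∈ icoHitsInt c q := by
  simp only [icoHitsInt, mem_ofPred_eq, mem_Ico]
  constructor
  · rintro ⟨n, h₁, h₂⟩
    exact ⟨n - m, by push_cast; linarith, by push_cast; linarith⟩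
  · rintro ⟨n, h₁, h₂⟩
    exact ⟨n + m, by push_cast; linarith, by push_cast; linarith⟩

lemma vadd_preimage_icoHitsInt (c q : ℝ) (g : AddSubgroup.zmultiples (1 : ℝ)) :
    (g +ᵥ ·) ⁻¹' icoHitsInt c q = icoHitsInt c q := by
  obtain ⟨_, m, rfl⟩ := g
  ext x
  rw [mem_preimage, AddSubgroup.vadd_def, vadd_eq_add, add_comm]
  simpa using add_int_mem_icoHitsInt_iff c q m x

lemma icoHitsInt_inter_Ioc {q : ℝ} (hq : q ≤ 1) (c : ℝ) :
    icoHitsInt c q ∩ Ioc (-c) (-c + 1) = Ioc (1 - c - q) (1 - c) := by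
  ext x
  simp only [icoHitsInt, mem_inter_iff, mem_ofPred_eq, mem_Ico, mem_Ioc]
  constructor
  · rintro ⟨⟨n, hn₁, hn₂⟩, hx₁, hx₂⟩
    have hn_pos : 0 < n := by exact_mod_cast (by linarith : (0 : ℝ) < n)
    have hn_lt_two : n < 2 := by exact_mod_cast (by linarith : (n : ℝ) < 2)
    obtain rfl : n = 1 := by omega
    push_cast at hn₁ hn₂
    constructor <;> linarith
  · rintro ⟨hx₁, hx₂⟩
    exact ⟨⟨1, by push_cast; linarith, by push_cast; linarith⟩, by linarith, by linarith⟩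

theorem volume_Ico_inter_icoHitsInt {q : ℝ} (hq : q ≤ 1) (c : ℝ) :
    volume (Ico 0 1 ∩ icoHitsInt c q) = ENNReal.ofReal q := by
  calc volume (Ico 0 1 ∩ icoHitsInt c q)
      = volume (icoHitsInt c q ∩ Ioc 0 (0 + 1)) := by
        rw [inter_comm, zero_add]
        exact measure_congr (ae_eq_set_inter (ae_eq_refl _) Ico_ae_eq_Ioc)
    _ = volume (icoHitsInt c q ∩ Ioc (-c) (-c + 1)) :=
        (isAddFundamentalDomain_Ioc one_pos 0).measure_set_eq (isAddFundamentalDomain_Ioc one_pos _)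
          (measurableSet_icoHitsInt c q) (vadd_preimage_icoHitsInt c q)
    _ = ENNReal.ofReal q := by
        rw [icoHitsInt_inter_Ioc hq, Real.volume_Ioc]
        ring_nf

/-- With `U` uniform on `[0,1)`, the probability that the interval
`[Q_{i-1}(U), Q_i(U))` contains an integer equals `q' i`. -/
theorem stmt_5 (s : ℕ) (q' : ℕ → ℝ)
    (h : ∀ i < s, 0 ≤ q' i ∧ q' i < 1) :
    ∀ i < s,
      volume {u : ℝ | u ∈ Set.Ico (0 : ℝ) 1 ∧
          ∃ n : ℤ, u + ∑ j ∈ Finset.range i, q' j ≤ (n : ℝ) ∧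
            (n : ℝ) < u + ∑ j ∈ Finset.range (i + 1), q' j}
        = ENNReal.ofReal (q' i) := by
  intro i hi
  simp only [Finset.sum_range_succ, ← add_assoc]
  exact volume_Ico_inter_icoHitsInt (h i hi).2.le _
end

section
/- Let q_1,…,q_s ≥ 0 with Σ_i q_i = r ∈ ℕ, let q'_i = q_i − ⌊q_i⌋, and for u ∈ [0,1) define the allocation A_i(u) = ⌊q_i⌋ + A'_i(u) where A'_i(u) is the indicator that [u + Σ_{j<i} q'_j, u + Σ_{j≤i} q'_j) contains an integer. Then for every u ∈ [0,1), A(u) is an allocation satisfying quota: Σ_i A_i(u) = r and ⌊q_i⌋ ≤ A_i(u) ≤ ⌈q_i⌉ for all i. -/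
/-!
An interval `[a, b)` with `0 ≤ b - a < 1` contains an integer exactly when `⌈a⌉ < ⌈b⌉`, and then
`⌈b⌉ = ⌈a⌉ + 1`; so the extra seat of state `i` is `⌈Q_i⌉ - ⌈Q_{i-1}⌉`. These telescope to
`⌈u + ∑ q_i - ∑ ⌊q_i⌋⌉ - ⌈u⌉ = r - ∑ ⌊q_i⌋`, and each of them lies between `0` and
`⌈q'_i⌉ = ⌈q_i⌉ - ⌊q_i⌋` by subadditivity of the ceiling.
-/

open Finset

section FloorRing

variable {α : Type*} [Ring α] [LinearOrder α] [FloorRing α]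

theorem exists_intCast_mem_Ico_iff_ceil_lt {a b : α} :
    (∃ n : ℤ, a ≤ n ∧ (n : α) < b) ↔ ⌈a⌉ < ⌈b⌉ := by
  constructor
  · rintro ⟨n, han, hnb⟩
    exact (Int.ceil_le.mpr han).trans_lt (Int.lt_ceil.mpr hnb)
  · exact fun h => ⟨⌈a⌉, Int.le_ceil a, Int.lt_ceil.mp h⟩

def shiftedFractSum (q : ℕ → α) (u : α) (i : ℕ) : α :=
  u + ∑ j ∈ range i, Int.fract (q j)

theorem shiftedFractSum_succ (q : ℕ → α) (u : α) (i : ℕ) :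
    shiftedFractSum q u (i + 1) = shiftedFractSum q u i + Int.fract (q i) := by
  rw [shiftedFractSum, shiftedFractSum, sum_range_succ, add_assoc]

variable [IsStrictOrderedRing α]

theorem ite_exists_intCast_mem_Ico_eq_ceil_sub {a b : α}
    [Decidable (∃ n : ℤ, a ≤ n ∧ (n : α) < b)] (hab : a ≤ b) (hba : b < a + 1) :
    (if ∃ n : ℤ, a ≤ n ∧ (n : α) < b then 1 else 0 : ℤ) = ⌈b⌉ - ⌈a⌉ := by
  have hle : ⌈a⌉ ≤ ⌈b⌉ := Int.ceil_mono hab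
  have hle_succ : ⌈b⌉ ≤ ⌈a⌉ + 1 := by simpa using Int.ceil_mono hba.le
  split_ifs with h <;> rw [exists_intCast_mem_Ico_iff_ceil_lt] at h <;> omega

theorem floor_add_ceil_add_fract_sub_ceil_le_ceil (x y : α) :
    ⌊y⌋ + (⌈x + Int.fract y⌉ - ⌈x⌉) ≤ ⌈y⌉ := by
  have hsub := Int.ceil_add_le x (Int.fract y)
  have hsplit : ⌈y⌉ = ⌊y⌋ + ⌈Int.fract y⌉ := by
    conv_lhs => rw [← Int.floor_add_fract y]
    exact Int.ceil_intCast_add _ _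
  omega

theorem sum_floor_add_ceil_shiftedFractSum_sub (q : ℕ → α) (u : α) (s : ℕ) :
    ∑ i ∈ range s, (⌊q i⌋ + (⌈shiftedFractSum q u (i + 1)⌉ - ⌈shiftedFractSum q u i⌉)) =
      ⌈u + ∑ i ∈ range s, q i⌉ - ⌈u⌉ := by
  have hlast : shiftedFractSum q u s =
      u + ∑ i ∈ range s, q i - ((∑ i ∈ range s, ⌊q i⌋ : ℤ) : α) := by
    simp only [shiftedFractSum, ← Int.self_sub_floor, sum_sub_distrib, Int.cast_sum]
    abel
  rw [sum_add_distrib, sum_range_sub (fun i => ⌈shiftedFractSum q u i⌉), hlast,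
    Int.ceil_sub_intCast, shiftedFractSum, range_zero, sum_empty, add_zero]
  ring

end FloorRing

open Classical in
theorem stmt_6_general (s r : ℕ) (q : ℕ → ℝ)
    (hsum : ∑ i ∈ Finset.range s, q i = r)
    (u : ℝ)
    (A : ℕ → ℤ)
    (hA : ∀ i, A i = ⌊q i⌋ +
      (if ∃ n : ℤ, u + ∑ j ∈ Finset.range i, (q j - ⌊q j⌋) ≤ (n : ℝ) ∧
            (n : ℝ) < u + ∑ j ∈ Finset.range (i + 1), (q j - ⌊q j⌋)
        then 1 else 0)) :
    (∑ i ∈ Finset.range s, A i = r) ∧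
      ∀ i < s, ⌊q i⌋ ≤ A i ∧ A i ≤ ⌈q i⌉ := by
  have hA_ceil : ∀ i, A i =
      ⌊q i⌋ + (⌈shiftedFractSum q u (i + 1)⌉ - ⌈shiftedFractSum q u i⌉) := fun i => by
    have hle := Int.fract_nonneg (q i)
    have hlt := Int.fract_lt_one (q i)
    rw [hA i, ← ite_exists_intCast_mem_Ico_eq_ceil_sub (by rw [shiftedFractSum_succ]; linarith)
      (by rw [shiftedFractSum_succ]; linarith)]
    rfl
  refine ⟨?_, fun i _ => ?_⟩
  · rw [sum_congr rfl fun i _ => hA_ceil i, sum_floor_add_ceil_shiftedFractSum_sub, hsum,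
      Int.ceil_add_natCast]
    ring
  · rw [hA_ceil i, shiftedFractSum_succ]
    have hmono := Int.ceil_mono (le_add_of_nonneg_right (Int.fract_nonneg (q i)) :
      shiftedFractSum q u i ≤ _)
    exact ⟨by omega, floor_add_ceil_add_fract_sub_ceil_le_ceil _ _⟩

open Classical in
/-- The stochastic apportionment allocation
`A i u = ⌊q i⌋ + A' i u` is, for every shift `u ∈ [0,1)`, an allocation
satisfying quota: it sums to `r` and lies between lower and upper quotas. -/
theorem stmt_6 (s r : ℕ) (q : ℕ → ℝ) (hq : ∀ i < s, 0 ≤ q i)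
    (hsum : ∑ i ∈ Finset.range s, q i = r)
    (u : ℝ) (hu : 0 ≤ u ∧ u < 1)
    (A : ℕ → ℤ)
    (hA : ∀ i, A i = ⌊q i⌋ +
      (if ∃ n : ℤ, u + ∑ j ∈ Finset.range i, (q j - ⌊q j⌋) ≤ (n : ℝ) ∧
            (n : ℝ) < u + ∑ j ∈ Finset.range (i + 1), (q j - ⌊q j⌋)
        then 1 else 0)) :
    (∑ i ∈ Finset.range s, A i = r) ∧
      ∀ i < s, ⌊q i⌋ ≤ A i ∧ A i ≤ ⌈q i⌉ :=
  stmt_6_general s r q hsum u A hA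
end

section
/- Let q_1,…,q_s ≥ 0 with Σ_i q_i = r ∈ ℕ, and let U be uniform on [0,1). With A_i(U) = ⌊q_i⌋ plus the indicator that [U + Σ_{j<i}(q_j − ⌊q_j⌋), U + Σ_{j≤i}(q_j − ⌊q_j⌋)) contains an integer, we have E[A_i(U)] = q_i for every i. -/
/-!
Up to the constant `⌊q i⌋`, the allocation is the indicator that the window
`[U + a, U + a + fract (q i))` contains an integer, where `a` is the sum of the fractional
parts of the earlier quotas. As a function of `U` this is `1`-periodic, so its integral over a
period does not depend on the shift `a`; without shift, the window `[x, x + f)` with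
`x ∈ (0, 1]` contains an integer exactly when `x > 1 - f`, an event of probability `f`.
-/

open MeasureTheory Set

def intHitSet (f : ℝ) : Set ℝ := ⋃ n : ℤ, Ioc ((n : ℝ) - f) n

lemma mem_intHitSet {f x : ℝ} : x ∈ intHitSet f ↔ ∃ n : ℤ, x ≤ n ∧ (n : ℝ) < x + f := by
  simp only [intHitSet, mem_iUnion, mem_Ioc]
  exact exists_congr fun n => ⟨fun h => ⟨h.2, by linarith [h.1]⟩, fun h => ⟨by linarith [h.2], h.1⟩⟩

lemma measurableSet_intHitSet (f : ℝ) : MeasurableSet (intHitSet f) :=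
  MeasurableSet.iUnion fun _ => measurableSet_Ioc

lemma add_one_mem_intHitSet_iff {f x : ℝ} : x + 1 ∈ intHitSet f ↔ x ∈ intHitSet f := by
  simp only [mem_intHitSet]
  constructor
  · rintro ⟨n, h₁, h₂⟩
    exact ⟨n - 1, by push_cast; linarith, by push_cast; linarith⟩
  · rintro ⟨n, h₁, h₂⟩
    exact ⟨n + 1, by push_cast; linarith, by push_cast; linarith⟩

lemma periodic_indicator_intHitSet (f : ℝ) :
    Function.Periodic ((intHitSet f).indicator (1 : ℝ → ℝ)) 1 := fun x => by
  by_cases hx : x ∈ intHitSet f <;> simp [hx, add_one_mem_intHitSet_iff]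

lemma intHitSet_inter_Ioc_zero_one {f : ℝ} (hf : f ≤ 1) :
    intHitSet f ∩ Ioc 0 1 = Ioc (1 - f) 1 := by
  ext x
  simp only [mem_inter_iff, mem_intHitSet, mem_Ioc]
  constructor
  · rintro ⟨⟨n, hxn, hnx⟩, hx₀, hx₁⟩
    have hn : n = 1 := by
      have : (0 : ℤ) < n := by exact_mod_cast hx₀.trans_le hxn
      have : n < (2 : ℤ) := by exact_mod_cast (show (n : ℝ) < 2 by linarith)
      omega
    subst hn
    exact ⟨by push_cast at hnx; linarith, hx₁⟩
  · rintro ⟨hx₀, hx₁⟩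
    exact ⟨⟨1, by simpa using hx₁, by push_cast; linarith⟩, by linarith, hx₁⟩

lemma integral_indicator_intHitSet {f : ℝ} (hf₀ : 0 ≤ f) (hf₁ : f ≤ 1) :
    ∫ x in (0 : ℝ)..1, (intHitSet f).indicator 1 x = f := by
  rw [intervalIntegral.integral_of_le zero_le_one, integral_indicator (measurableSet_intHitSet f),
    Measure.restrict_restrict (measurableSet_intHitSet f), intHitSet_inter_Ioc_zero_one hf₁]
  simp [hf₀]

lemma setIntegral_Ico_indicator_intHitSet_comp_add {f : ℝ} (hf₀ : 0 ≤ f) (hf₁ : f ≤ 1) (a : ℝ) :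
    ∫ u in Ico (0 : ℝ) 1, (intHitSet f).indicator 1 (u + a) = f := by
  rw [integral_Ico_eq_integral_Ioo, ← integral_Ioc_eq_integral_Ioo,
    ← intervalIntegral.integral_of_le zero_le_one, intervalIntegral.integral_comp_add_right,
    zero_add, add_comm 1 a, (periodic_indicator_intHitSet f).intervalIntegral_add_eq a 0, zero_add,
    integral_indicator_intHitSet hf₀ hf₁]

lemma integrable_indicator_intHitSet_comp_add (μ : Measure ℝ) [IsFiniteMeasure μ] (f a : ℝ) :
    Integrable (fun u => (intHitSet f).indicator (1 : ℝ → ℝ) (u + a)) μ :=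
  Integrable.of_bound
    ((measurable_const.indicator (measurableSet_intHitSet f)).comp
      (measurable_add_const a)).aestronglyMeasurable 1
    (ae_of_all _ fun u => (norm_indicator_le_norm_self _ _).trans (by simp))

open Classical in
theorem setIntegral_Ico_floor_add_ite_exists_int (q a : ℝ) :
    ∫ u in Ico (0 : ℝ) 1,
        ((⌊q⌋ : ℝ) + if ∃ n : ℤ, u + a ≤ n ∧ (n : ℝ) < u + (a + (q - ⌊q⌋)) then 1 else 0) = q := by
  have hind : ∀ u, (if ∃ n : ℤ, u + a ≤ n ∧ (n : ℝ) < u + (a + (q - ⌊q⌋)) then (1 : ℝ) else 0) =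
      (intHitSet (Int.fract q)).indicator 1 (u + a) := fun u => by
    simp only [indicator_apply, mem_intHitSet, Int.fract, add_assoc, Pi.one_apply]
  simp_rw [hind]
  rw [integral_add (integrable_const _) (integrable_indicator_intHitSet_comp_add _ (Int.fract q) a),
    setIntegral_Ico_indicator_intHitSet_comp_add (Int.fract_nonneg q) (Int.fract_lt_one q).le,
    setIntegral_const]
  simp [Int.floor_add_fract]

open MeasureTheory Classical in
theorem stmt_7_general (s : ℕ) (q : ℕ → ℝ) :
    ∀ i < s,
      (∫ u in Set.Ico (0 : ℝ) 1,
          ((⌊q i⌋ : ℝ) +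
            (if ∃ n : ℤ, u + ∑ j ∈ Finset.range i, (q j - ⌊q j⌋) ≤ (n : ℝ) ∧
                  (n : ℝ) < u + ∑ j ∈ Finset.range (i + 1), (q j - ⌊q j⌋)
              then (1 : ℝ) else 0)))
        = q i := by
  intro i _
  simp only [Finset.sum_range_succ]
  exact setIntegral_Ico_floor_add_ite_exists_int (q i) _

open MeasureTheory Classical in
/-- Fairness of the stochastic apportionment scheme: with `U` uniform on
`[0,1)`, the expected allocation to state `i` equals its quota `q i`. -/
theorem stmt_7 (s r : ℕ) (q : ℕ → ℝ) (hq : ∀ i < s, 0 ≤ q i)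
    (hsum : ∑ i ∈ Finset.range s, q i = r) :
    ∀ i < s,
      (∫ u in Set.Ico (0 : ℝ) 1,
          ((⌊q i⌋ : ℝ) +
            (if ∃ n : ℤ, u + ∑ j ∈ Finset.range i, (q j - ⌊q j⌋) ≤ (n : ℝ) ∧
                  (n : ℝ) < u + ∑ j ∈ Finset.range (i + 1), (q j - ⌊q j⌋)
              then (1 : ℝ) else 0)))
        = q i :=
  stmt_7_general s q
end
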